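/- For σ > 0 let Y₁, Y₂ be independent Gaussian random variables, each with mean 1 and variance σ², and let h(y) = tanh(y/σ²). Then lim_{σ→∞} σ⁴·E[h(Y₁)·h(Y₂)] = 1; that is, the mean spread after the addition-mod-2 (multiplication) step of recursive decoding decays like σ^{−4}, matching the mean spread of an AWGN channel with noise power σ⁴. -/

import Mathlib

/-! By independence the mean of the product of spreads is the square of the mean spread, so it
suffices that `σ² E[tanh (Y / σ²)] → 1` for `Y ~ N(1, σ²)`. Since `|tanh u - u| ≤ |u|³ / 3`, the
quantity `σ² E[tanh (Y / σ²)]` differs from `E[Y] = 1` by at most `E|Y|³ / (3σ⁴) = O(1 / σ)`. -/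

open MeasureTheory ProbabilityTheory Filter

theorem le_of_le_of_hasDerivAt_le {f f' g g' : ℝ → ℝ} (hf : ∀ t, HasDerivAt f (f' t) t)
    (hg : ∀ t, HasDerivAt g (g' t) t) (h0 : f 0 ≤ g 0) (hderiv : ∀ t, 0 ≤ t → f' t ≤ g' t)
    {x : ℝ} (hx : 0 ≤ x) : f x ≤ g x :=
  image_le_of_deriv_right_le_deriv_boundary
    (fun t _ => (hf t).continuousAt.continuousWithinAt) (fun t _ => (hf t).hasDerivWithinAt)
    h0 (fun t _ => (hg t).continuousAt.continuousWithinAt) (fun t _ => (hg t).hasDerivWithinAt)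
    (fun t ht => hderiv t ht.1) ⟨hx, le_rfl⟩

namespace Real

theorem hasDerivAt_tanh (x : ℝ) : HasDerivAt tanh (1 - tanh x ^ 2) x := by
  have h : HasDerivAt (fun y => sinh y / cosh y) _ x :=
    (hasDerivAt_sinh x).div (hasDerivAt_cosh x) (cosh_pos x).ne'
  rw [show tanh = fun y => sinh y / cosh y from funext tanh_eq_sinh_div_cosh]
  refine h.congr_deriv ?_
  field_simp

@[fun_prop]
theorem continuous_tanh : Continuous tanh :=
  continuous_iff_continuousAt.2 fun x => (hasDerivAt_tanh x).continuousAt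

theorem tanh_nonneg {x : ℝ} (hx : 0 ≤ x) : 0 ≤ tanh x := by
  rw [tanh_eq_sinh_div_cosh]
  exact div_nonneg (sinh_nonneg_iff.2 hx) (cosh_pos x).le

theorem tanh_le_self {x : ℝ} (hx : 0 ≤ x) : tanh x ≤ x :=
  le_of_le_of_hasDerivAt_le hasDerivAt_tanh (fun t => hasDerivAt_id t) (by simp)
    (fun t _ => by nlinarith [sq_nonneg (tanh t)]) hx

theorem self_sub_tanh_le {x : ℝ} (hx : 0 ≤ x) : x - tanh x ≤ x ^ 3 / 3 := by
  refine le_of_le_of_hasDerivAt_le (f' := fun t => 1 - (1 - tanh t ^ 2)) (g' := fun t => t ^ 2)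
    (fun t => (hasDerivAt_id t).sub (hasDerivAt_tanh t))
    (fun t => by simpa using (hasDerivAt_pow 3 t).div_const 3) (by simp) (fun t ht => ?_) hx
  nlinarith [tanh_nonneg ht, tanh_le_self ht]

theorem abs_tanh_sub_self_le (x : ℝ) : |tanh x - x| ≤ |x| ^ 3 / 3 := by
  wlog hx : 0 ≤ x generalizing x
  · simpa [tanh_neg, abs_sub_comm, neg_add_eq_sub] using this (-x) (by linarith)
  rw [abs_sub_comm, abs_of_nonneg (sub_nonneg.2 (tanh_le_self hx)), abs_of_nonneg hx]
  exact self_sub_tanh_le hx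

end Real

open Real

theorem abs_mul_integral_tanh_div_sub_integral_le {μ : Measure ℝ}
    (hμ₁ : Integrable (fun y => y) μ) (hμ₃ : Integrable (fun y => |y| ^ 3) μ) {s : ℝ} (hs : 0 < s) :
    |s * ∫ y, tanh (y / s) ∂μ - ∫ y, y ∂μ| ≤ (∫ y, |y| ^ 3 ∂μ) / (3 * s ^ 2) := by
  have hpointwise : ∀ y, ‖s * tanh (y / s) - y‖ ≤ |y| ^ 3 / (3 * s ^ 2) := fun y => by
    have h := abs_tanh_sub_self_le (y / s)
    rw [abs_div, abs_of_pos hs] at h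
    calc ‖s * tanh (y / s) - y‖ = |s * (tanh (y / s) - y / s)| := by
          rw [mul_sub, mul_div_cancel₀ y hs.ne', Real.norm_eq_abs]
      _ = s * |tanh (y / s) - y / s| := by rw [abs_mul, abs_of_pos hs]
      _ ≤ s * ((|y| / s) ^ 3 / 3) := by gcongr
      _ = |y| ^ 3 / (3 * s ^ 2) := by field_simp
  have hbound : Integrable (fun y => |y| ^ 3 / (3 * s ^ 2)) μ := hμ₃.div_const _
  have hdiff : Integrable (fun y => s * tanh (y / s) - y) μ :=
    hbound.mono' (by fun_prop) (ae_of_all _ hpointwise)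
  have htanh : Integrable (fun y => tanh (y / s)) μ := by
    have := (hdiff.add hμ₁).div_const s
    refine this.congr (ae_of_all _ fun y => ?_)
    simp only [Pi.add_apply, sub_add_cancel]
    field_simp
  calc |s * ∫ y, tanh (y / s) ∂μ - ∫ y, y ∂μ| = ‖∫ y, (s * tanh (y / s) - y) ∂μ‖ := by
        rw [integral_sub (htanh.const_mul s) hμ₁, integral_const_mul, Real.norm_eq_abs]
    _ ≤ ∫ y, |y| ^ 3 / (3 * s ^ 2) ∂μ :=
        norm_integral_le_of_norm_le hbound (ae_of_all _ hpointwise)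
    _ = (∫ y, |y| ^ 3 ∂μ) / (3 * s ^ 2) := integral_div _ _

theorem gaussianReal_eq_map_standard (m : ℝ) {σ : ℝ} (hσ : 0 ≤ σ) :
    gaussianReal m (σ ^ 2).toNNReal = (gaussianReal 0 1).map (fun z => σ * z + m) := by
  have : (fun z => σ * z + m) = (· + m) ∘ (σ * ·) := rfl
  rw [this, ← Measure.map_map (by fun_prop) (by fun_prop), gaussianReal_map_const_mul,
    gaussianReal_map_add_const]
  congr 1
  · ring
  · ext; simp [hσ]

theorem integral_abs_pow_three_gaussianReal_le (m : ℝ) {σ : ℝ} (hσ : 1 ≤ σ) :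
    ∫ y, |y| ^ 3 ∂gaussianReal m (σ ^ 2).toNNReal ≤
      σ ^ 3 * ∫ z, (|z| + |m|) ^ 3 ∂gaussianReal 0 1 := by
  have hmeas : AEMeasurable (fun z => σ * z + m) (gaussianReal 0 1) := by fun_prop
  rw [gaussianReal_eq_map_standard m (by linarith), integral_map hmeas (by fun_prop),
    ← integral_const_mul]
  have hint : Integrable (fun z => (|z| + |m|) ^ 3) (gaussianReal 0 1) := by
    have hLp := (memLp_id_gaussianReal (μ := 0) (v := 1) 3).abs.add (memLp_const |m|)
    refine (hLp.integrable_norm_pow' (p := 3)).congr (ae_of_all _ fun z => ?_)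
    simp [abs_of_nonneg (add_nonneg (abs_nonneg z) (abs_nonneg m))]
  refine integral_mono_of_nonneg (ae_of_all _ fun z => by positivity) (hint.const_mul _)
    (ae_of_all _ fun z => ?_)
  calc |σ * z + m| ^ 3 ≤ (σ * |z| + |m|) ^ 3 := by
        gcongr
        calc |σ * z + m| ≤ |σ * z| + |m| := abs_add_le _ _
          _ = σ * |z| + |m| := by rw [abs_mul, abs_of_nonneg (by linarith)]
    _ ≤ (σ * |z| + σ * |m|) ^ 3 := by gcongr; nlinarith [abs_nonneg m]
    _ = σ ^ 3 * (|z| + |m|) ^ 3 := by ring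

theorem tendsto_sq_mul_integral_tanh_gaussianReal (m : ℝ) :
    Tendsto (fun σ : ℝ => σ ^ 2 * ∫ y, tanh (y / σ ^ 2) ∂gaussianReal m (σ ^ 2).toNNReal)
      atTop (nhds m) := by
  set K := ∫ z, (|z| + |m|) ^ 3 ∂gaussianReal 0 1
  have hbound : ∀ᶠ σ : ℝ in atTop,
      ‖σ ^ 2 * ∫ y, tanh (y / σ ^ 2) ∂gaussianReal m (σ ^ 2).toNNReal - m‖ ≤ K / (3 * σ) := by
    filter_upwards [eventually_ge_atTop 1] with σ hσ
    have hint₁ : Integrable (fun y => y) (gaussianReal m (σ ^ 2).toNNReal) :=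
      memLp_one_iff_integrable.1 (memLp_id_gaussianReal 1)
    have hint₃ : Integrable (fun y => |y| ^ 3) (gaussianReal m (σ ^ 2).toNNReal) := by
      simpa using (memLp_id_gaussianReal 3).integrable_norm_pow' (p := 3)
    have h := abs_mul_integral_tanh_div_sub_integral_le hint₁ hint₃ (by positivity : 0 < σ ^ 2)
    rw [integral_id_gaussianReal] at h
    calc _ ≤ (∫ y, |y| ^ 3 ∂gaussianReal m (σ ^ 2).toNNReal) / (3 * (σ ^ 2) ^ 2) := h
      _ ≤ σ ^ 3 * K / (3 * (σ ^ 2) ^ 2) := by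
          gcongr; exact integral_abs_pow_three_gaussianReal_le m hσ
      _ = K / (3 * σ) := by field_simp
  have hdecay : Tendsto (fun σ : ℝ => K / (3 * σ)) atTop (nhds 0) :=
    tendsto_const_nhds.div_atTop (tendsto_id.const_mul_atTop (by norm_num))
  exact tendsto_sub_nhds_zero_iff.1 (squeeze_zero_norm' hbound hdecay)

/-- The addition-mod-2 step squares the noise power: if `Y₁, Y₂` are independent `N(1, σ²)`
AWGN(σ²) outputs with spreads `h(Yᵢ) = tanh(Yᵢ/σ²)`, then `σ⁴·E[h(Y₁)h(Y₂)] → 1` as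
`σ → ∞`, i.e. the mean spread after multiplying spreads decays like `σ^{−4}`, matching the
mean spread of an AWGN channel with noise power `σ⁴`. -/
theorem product_spread_asymptotics :
    Tendsto (fun σ : ℝ =>
        σ^4 * ∫ p : ℝ × ℝ, Real.tanh (p.1 / σ^2) * Real.tanh (p.2 / σ^2)
          ∂((gaussianReal 1 (σ^2).toNNReal).prod (gaussianReal 1 (σ^2).toNNReal)))
      atTop (nhds 1) := by
  have hsquare : ∀ σ : ℝ,
      σ^4 * ∫ p : ℝ × ℝ, tanh (p.1 / σ^2) * tanh (p.2 / σ^2)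
          ∂((gaussianReal 1 (σ^2).toNNReal).prod (gaussianReal 1 (σ^2).toNNReal))
        = (σ^2 * ∫ y, tanh (y / σ^2) ∂gaussianReal 1 (σ^2).toNNReal) ^ 2 := fun σ => by
    rw [integral_prod_mul (fun y => tanh (y / σ^2)) (fun y => tanh (y / σ^2))]
    ring
  simpa [hsquare] using (tendsto_sq_mul_integral_tanh_gaussianReal 1).pow 2
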